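/- For n ≥ 4, the run-length heap representations of the legal GA1 options of the constant bit string of length n, after deleting runs of length 1, are exactly the multisets {j, n−j} for 2 ≤ j ≤ n−j, the multisets {k, n−1−k} for 2 ≤ k ≤ n−1−k, and the singletons {n−1} and {n−2}. -/

import Mathlib

/-! From a constant string every crossover and every mutation produces two unequal adjacent bits,
so every move is legal. Crossover at `k` leaves the runs `k, n - k`; mutation at `i` leaves the runs
`i, 1, n - 1 - i`, empty ones dropped. Since run lengths are positive, deleting runs of length 1
keeps exactly the runs of length at least 2. So the heaps are the multisets `{a, b}` cut down to
their entries `≥ 2`, for `a + b = n` with `a, b ≥ 1` and for `a + b = n - 1`; ordering `a ≤ b`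
and separating `a ∈ {0, 1}` from `a ≥ 2` yields the multisets listed in the statement. -/

/-- The minimum excludant of a set of naturals. -/
noncomputable def mex (S : Set ℕ) : ℕ := sInf {n : ℕ | n ∉ S}

/-- The entropy of a bit string: the number of adjacent pairs of unequal bits. -/
def entropy (b : List Bool) : ℕ := (b.zip b.tail).countP fun p => p.1 != p.2

/-- Crossover at position `k` (1-indexed): flip bits `b₁,…,b_k`. -/
def ga1Crossover (k : ℕ) (b : List Bool) : List Bool := (b.take k).map (! ·) ++ b.drop k

/-- Mutation at (0-indexed) position `i`: flip bit `i`. -/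
def ga1Mutate (i : ℕ) (b : List Bool) : List Bool := b.set i (!(b.getD i false))

/-- The legal moves of GA1: a crossover or a mutation that strictly increases entropy. -/
def ga1Move (b b' : List Bool) : Prop :=
  ((∃ k, 1 ≤ k ∧ k ≤ b.length - 1 ∧ b' = ga1Crossover k b) ∨
    (∃ i, i < b.length ∧ b' = ga1Mutate i b)) ∧
  entropy b < entropy b'

/-- Helper for computing run lengths: `cur` is the current bit, `cnt` the length of the
current run so far. -/
def runLengthsAux (cur : Bool) (cnt : ℕ) : List Bool → List ℕ
  | [] => [cnt]
  | a :: rest => if a = cur then runLengthsAux cur (cnt + 1) rest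
                 else cnt :: runLengthsAux a 1 rest

/-- The sequence of run lengths of a bit string (a run is a maximal constant sub-string). -/
def runLengths : List Bool → List ℕ
  | [] => []
  | a :: rest => runLengthsAux a 1 rest

/-- The multiset of run lengths of a bit string with all entries equal to 1 deleted. -/
def heapOf (b : List Bool) : Multiset ℕ := (↑(runLengths b) : Multiset ℕ).filter (· ≠ 1)

lemma entropy_cons_cons (x y : Bool) (l : List Bool) :
    entropy (x :: y :: l) = (if x = y then 0 else 1) + entropy (y :: l) := by
  by_cases h : x = y
  · simp [entropy, h]
  · simp [entropy, h]
    omega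

lemma entropy_eq_zero_iff_pairwise {l : List Bool} : entropy l = 0 ↔ l.Pairwise (· = ·) := by
  rw [← List.isChain_iff_pairwise]
  induction l using List.twoStepInduction with
  | nil | singleton => simp [entropy]
  | cons_cons x y l _ ih => by_cases h : x = y <;> simp [entropy_cons_cons, h, ih]

lemma entropy_replicate (n : ℕ) (c : Bool) : entropy (List.replicate n c) = 0 :=
  entropy_eq_zero_iff_pairwise.2 (List.pairwise_replicate.2 (Or.inr rfl))

lemma entropy_pos_of_mem {l : List Bool} {x y : Bool} (hx : x ∈ l) (hy : y ∈ l)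
    (hxy : x ≠ y) : 0 < entropy l := by
  by_contra! h
  exact hxy <| (entropy_eq_zero_iff_pairwise.1 (by omega)).forall_of_forall (fun _ _ => rfl) hx hy

lemma runLengthsAux_replicate_append (x : Bool) (cnt m : ℕ) (l : List Bool) :
    runLengthsAux x cnt (List.replicate m x ++ l) = runLengthsAux x (cnt + m) l := by
  induction m generalizing cnt with
  | zero => rfl
  | succ m ih => simp [List.replicate_succ, runLengthsAux, ih, Nat.add_right_comm, Nat.add_assoc]

lemma runLengthsAux_replicate_append_cons {x y : Bool} (h : y ≠ x) (cnt m : ℕ)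
    (l : List Bool) :
    runLengthsAux x cnt (List.replicate m x ++ y :: l) = (cnt + m) :: runLengthsAux y 1 l := by
  rw [runLengthsAux_replicate_append, runLengthsAux, if_neg h]

lemma runLengthsAux_replicate (x : Bool) (cnt m : ℕ) :
    runLengthsAux x cnt (List.replicate m x) = [cnt + m] := by
  simpa [runLengthsAux] using runLengthsAux_replicate_append x cnt m []

lemma pos_of_mem_runLengthsAux {x : Bool} {cnt : ℕ} (hcnt : 0 < cnt) {l : List Bool} {r : ℕ}
    (hr : r ∈ runLengthsAux x cnt l) : 0 < r := by
  induction l generalizing x cnt with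
  | nil => simp_all [runLengthsAux]
  | cons y l ih =>
    rw [runLengthsAux] at hr
    split_ifs at hr
    · exact ih (Nat.succ_pos cnt) hr
    · rcases List.mem_cons.1 hr with rfl | hr
      exacts [hcnt, ih Nat.one_pos hr]

lemma heapOf_eq_filter_two_le (l : List Bool) :
    heapOf l = (runLengths l : Multiset ℕ).filter (2 ≤ ·) := by
  refine Multiset.filter_congr fun r hr => ?_
  have : 0 < r := by
    cases l with
    | nil => simp [runLengths] at hr
    | cons x l => exact pos_of_mem_runLengthsAux Nat.one_pos hr
  omega

lemma runLengths_replicate_append_replicate {x y : Bool} (h : y ≠ x) {a b : ℕ} (ha : a ≠ 0)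
    (hb : b ≠ 0) : runLengths (List.replicate a x ++ List.replicate b y) = [a, b] := by
  obtain ⟨a, rfl⟩ := Nat.exists_eq_succ_of_ne_zero ha
  obtain ⟨b, rfl⟩ := Nat.exists_eq_succ_of_ne_zero hb
  rw [List.replicate_succ, List.replicate_succ, List.cons_append, runLengths,
    runLengthsAux_replicate_append_cons h, runLengthsAux_replicate, Nat.add_comm 1, Nat.add_comm 1]

lemma heapOf_replicate_append_replicate {x y : Bool} (h : y ≠ x) {a b : ℕ} (ha : a ≠ 0)
    (hb : b ≠ 0) : heapOf (List.replicate a x ++ List.replicate b y) =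
      ({a, b} : Multiset ℕ).filter (2 ≤ ·) := by
  rw [heapOf_eq_filter_two_le, runLengths_replicate_append_replicate h ha hb]
  rfl

lemma heapOf_replicate_append_cons_replicate {x y : Bool} (h : y ≠ x) (a b : ℕ) :
    heapOf (List.replicate a x ++ y :: List.replicate b x) =
      ({a, b} : Multiset ℕ).filter (2 ≤ ·) := by
  rw [heapOf_eq_filter_two_le, show ({a, b} : Multiset ℕ) = ↑[a, b] from rfl,
    Multiset.filter_coe, Multiset.filter_coe, Multiset.coe_eq_coe]
  rcases a with _ | a <;> rcases b with _ | b <;>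
    simp [runLengths, List.replicate_succ, runLengthsAux_replicate_append_cons,
      runLengthsAux_replicate, runLengthsAux, h, Ne.symm h, List.filter_cons, Nat.add_comm 1]

lemma ga1Crossover_replicate {k n : ℕ} (hk : k ≤ n) (c : Bool) :
    ga1Crossover k (List.replicate n c) = List.replicate k (!c) ++ List.replicate (n - k) c := by
  simp [ga1Crossover, List.take_replicate, List.drop_replicate, hk]

lemma ga1Mutate_replicate {i n : ℕ} (hi : i < n) (c : Bool) :
    ga1Mutate i (List.replicate n c) =
      List.replicate i c ++ (!c) :: List.replicate (n - 1 - i) c := by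
  rw [ga1Mutate, List.getD_eq_getElem _ _ (by simpa using hi), List.getElem_replicate,
    List.set_eq_take_append_cons_drop, if_pos (by simpa using hi)]
  simp [List.take_replicate, List.drop_replicate, hi.le, show n - (i + 1) = n - 1 - i by omega]

lemma ga1Move_replicate_iff {n : ℕ} (hn : 2 ≤ n) (c : Bool) (b : List Bool) :
    ga1Move (List.replicate n c) b ↔
      (∃ k, 1 ≤ k ∧ k ≤ n - 1 ∧ b = ga1Crossover k (List.replicate n c)) ∨
        ∃ i, i < n ∧ b = ga1Mutate i (List.replicate n c) := by
  rw [ga1Move, List.length_replicate, entropy_replicate, and_iff_left_iff_imp]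
  rintro (⟨k, hk1, hkn, rfl⟩ | ⟨i, hi, rfl⟩)
  · rw [ga1Crossover_replicate (by omega)]
    exact entropy_pos_of_mem (x := c) (y := !c) (by simp; omega) (by simp; omega) (by simp)
  · rw [ga1Mutate_replicate hi]
    exact entropy_pos_of_mem (x := c) (y := !c) (by simp; omega) (by simp) (by simp)

lemma filter_two_le_pair_of_two_le {a b : ℕ} (ha : 2 ≤ a) (hb : 2 ≤ b) :
    ({a, b} : Multiset ℕ).filter (2 ≤ ·) = {a, b} :=
  Multiset.filter_eq_self.2 (by simp [ha, hb])

lemma filter_two_le_pair_of_lt_two {a b : ℕ} (ha : a < 2) (hb : 2 ≤ b) :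
    ({a, b} : Multiset ℕ).filter (2 ≤ ·) = {b} := by
  simp [Multiset.filter_cons_of_neg _ (Nat.not_le_of_lt ha), hb]

lemma exists_pos_add_eq_filter_pair_iff {m : ℕ} (hm : 3 ≤ m) (M : Multiset ℕ) :
    (∃ a b, a ≠ 0 ∧ b ≠ 0 ∧ a + b = m ∧ M = ({a, b} : Multiset ℕ).filter (2 ≤ ·)) ↔
      (∃ j, 2 ≤ j ∧ j ≤ m - j ∧ M = {j, m - j}) ∨ M = {m - 1} := by
  constructor
  · rintro ⟨a, b, ha, hb, rfl, rfl⟩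
    wlog hab : a ≤ b generalizing a b
    · rw [Multiset.pair_comm, Nat.add_comm]
      exact this b a hb ha (by omega) (by omega)
    obtain rfl | ha2 := (by omega : a = 1 ∨ 2 ≤ a)
    · exact Or.inr (by rw [filter_two_le_pair_of_lt_two one_lt_two (by omega)]; simp)
    · exact Or.inl ⟨a, ha2, by omega, by rw [filter_two_le_pair_of_two_le ha2 (by omega)]; simp⟩
  · rintro (⟨j, hj, hjm, rfl⟩ | rfl)
    · exact ⟨j, m - j, by omega, by omega, by omega,
        (filter_two_le_pair_of_two_le hj (by omega)).symm⟩
    · exact ⟨1, m - 1, one_ne_zero, by omega, by omega,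
        (filter_two_le_pair_of_lt_two one_lt_two (by omega)).symm⟩

lemma exists_add_eq_filter_pair_iff {m : ℕ} (hm : 3 ≤ m) (M : Multiset ℕ) :
    (∃ a b, a + b = m ∧ M = ({a, b} : Multiset ℕ).filter (2 ≤ ·)) ↔
      (∃ j, 2 ≤ j ∧ j ≤ m - j ∧ M = {j, m - j}) ∨ M = {m - 1} ∨ M = {m} := by
  rw [← or_assoc, ← exists_pos_add_eq_filter_pair_iff hm]
  constructor
  · rintro ⟨a, b, rfl, rfl⟩
    by_cases hab : a ≠ 0 ∧ b ≠ 0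
    · exact Or.inl ⟨a, b, hab.1, hab.2, rfl, rfl⟩
    obtain rfl | rfl : a = 0 ∨ b = 0 := by omega
    · exact Or.inr (by rw [filter_two_le_pair_of_lt_two two_pos (by omega), Nat.zero_add])
    · exact Or.inr (by rw [Multiset.pair_comm, filter_two_le_pair_of_lt_two two_pos (by omega),
        Nat.add_zero])
  · rintro (⟨a, b, -, -, h, rfl⟩ | rfl)
    · exact ⟨a, b, h, rfl⟩
    · exact ⟨0, m, Nat.zero_add m, (filter_two_le_pair_of_lt_two two_pos (by omega)).symm⟩

lemma exists_ga1Move_replicate_heapOf_iff {n : ℕ} (hn : 2 ≤ n) (c : Bool) (M : Multiset ℕ) :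
    (∃ b, ga1Move (List.replicate n c) b ∧ M = heapOf b) ↔
      (∃ a b, a ≠ 0 ∧ b ≠ 0 ∧ a + b = n ∧ M = ({a, b} : Multiset ℕ).filter (2 ≤ ·)) ∨
        ∃ a b, a + b = n - 1 ∧ M = ({a, b} : Multiset ℕ).filter (2 ≤ ·) := by
  constructor
  · rintro ⟨b, hb, rfl⟩
    rcases (ga1Move_replicate_iff hn c b).1 hb with ⟨k, hk1, hkn, rfl⟩ | ⟨i, hi, rfl⟩
    · refine Or.inl ⟨k, n - k, by omega, by omega, by omega, ?_⟩
      rw [ga1Crossover_replicate (by omega), heapOf_replicate_append_replicate (by simp) (by omega)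
        (by omega)]
    · refine Or.inr ⟨i, n - 1 - i, by omega, ?_⟩
      rw [ga1Mutate_replicate hi, heapOf_replicate_append_cons_replicate (by simp)]
  · rintro (⟨a, b, ha, hb, rfl, rfl⟩ | ⟨a, b, hab, rfl⟩)
    · refine ⟨_, (ga1Move_replicate_iff hn c _).2 (Or.inl ⟨a, by omega, by omega, rfl⟩), ?_⟩
      rw [ga1Crossover_replicate (by omega), Nat.add_sub_cancel_left,
        heapOf_replicate_append_replicate (by simp) ha hb]
    · refine ⟨_, (ga1Move_replicate_iff hn c _).2 (Or.inr ⟨a, by omega, rfl⟩), ?_⟩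
      rw [ga1Mutate_replicate (by omega), heapOf_replicate_append_cons_replicate (by simp),
        show n - 1 - a = b by omega]

/-- For `n ≥ 4`, the run-length heap representations (with runs of length 1
deleted) of the legal GA1 options of the constant bit string of length `n` are exactly the
multisets `{j, n-j}` for `2 ≤ j ≤ n-j`, the multisets `{k, n-1-k}` for `2 ≤ k ≤ n-1-k`, and
the singletons `{n-1}` and `{n-2}`. -/
theorem ga1_const_options (n : ℕ) (hn : 4 ≤ n) (c : Bool) :
    {M | ∃ b', ga1Move (List.replicate n c) b' ∧ M = heapOf b'} =
      {M : Multiset ℕ |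
        (∃ j, 2 ≤ j ∧ j ≤ n - j ∧ M = ({j, n - j} : Multiset ℕ)) ∨
        (∃ k, 2 ≤ k ∧ k ≤ n - 1 - k ∧ M = ({k, n - 1 - k} : Multiset ℕ)) ∨
        M = ({n - 1} : Multiset ℕ) ∨ M = ({n - 2} : Multiset ℕ)} := by
  ext M
  rw [Set.mem_ofPred_eq, Set.mem_ofPred_eq, exists_ga1Move_replicate_heapOf_iff (by omega),
    exists_pos_add_eq_filter_pair_iff (by omega), exists_add_eq_filter_pair_iff (by omega),
    show n - 1 - 1 = n - 2 by omega]
  grind
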